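/- arXiv:cs/0605139 — 4 statements merged into one kernel-verified Lean document; each statement's English description precedes it below -/
import Mathlib

section
/- Let n = 2t+1 be an odd positive integer and f a Boolean function of n variables. Then AI(f) = t+1 if and only if f is balanced and the 2^{n−1} × 2^{n−1} matrix V(1_f) over F_2 is invertible. -/
/-- Hamming weight of a point of `F_2^n`. -/
def wtB {n : ℕ} (X : Fin n → ZMod 2) : ℕ :=
  (Finset.univ.filter (fun i => X i = 1)).card

/-- Coefficient of the monomial `∏_{i ∈ S} x_i` in the algebraic normal form of `f`. -/
def anfCoeff {n : ℕ} (f : (Fin n → ZMod 2) → ZMod 2) (S : Finset (Fin n)) : ZMod 2 :=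
  ∑ x ∈ Finset.univ.filter (fun x : Fin n → ZMod 2 => ∀ i, x i = 1 → i ∈ S), f x

/-- Algebraic degree of a Boolean function (degree of its ANF). -/
def degB {n : ℕ} (f : (Fin n → ZMod 2) → ZMod 2) : ℕ :=
  (Finset.univ.filter (fun S : Finset (Fin n) => anfCoeff f S ≠ 0)).sup Finset.card

/-- `g` is an annihilator of `f` : `g` is nonzero and `f · g = 0`. -/
def IsAnnihilator {n : ℕ} (f g : (Fin n → ZMod 2) → ZMod 2) : Prop :=
  g ≠ 0 ∧ ∀ x, f x * g x = 0

/-- Algebraic immunity: minimal degree of an annihilator of `f` or of `f ⊕ 1`. -/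
noncomputable def AI {n : ℕ} (f : (Fin n → ZMod 2) → ZMod 2) : ℕ :=
  sInf {d | ∃ g, (IsAnnihilator f g ∨ IsAnnihilator (fun x => f x + 1) g) ∧ degB g = d}

/-- Matrix whose rows (indexed by the set `T`) are the evaluation vectors `v(X)`, `X ∈ T`,
of all monomials of degree at most `D`. -/
def VSet {n : ℕ} (D : ℕ) (T : Set (Fin n → ZMod 2)) :
    Matrix T {S : Finset (Fin n) // S.card ≤ D} (ZMod 2) :=
  fun x S => ∏ i ∈ S.1, (x : Fin n → ZMod 2) i

/-- Matrix whose rows (listed according to the enumeration `Y`) are the evaluation vectors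
`v(Y r)` of all monomials of degree at most `D`. -/
def VEnum {n : ℕ} (D : ℕ) {N : ℕ} (Y : Fin N → (Fin n → ZMod 2)) :
    Matrix (Fin N) {S : Finset (Fin n) // S.card ≤ D} (ZMod 2) :=
  fun r S => ∏ i ∈ S.1, Y r i

/-!
Via the algebraic normal form, functions of degree `≤ d` correspond bijectively to coefficient
vectors on the monomials of degree `≤ d`, and `V(T) c` is the restriction to `T` of the function
with coefficients `c`. Hence `V(T)` is injective iff no nonzero function of degree `≤ d` vanishes
on `T`, and `AI(f) = t + 1` says that `V(1_f)` and `V(1_{f ⊕ 1})` are both injective. For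
`n = 2t + 1` there are exactly `2^{n-1}` monomials of degree `≤ t`, so injectivity of both forces
`f` to be balanced and `V(1_f)` to be square, hence invertible.

Conversely, a product of two functions of degree `≤ t` has degree `< n`, so its weight is even.
If `V(1_f)` is invertible, every point indicator on `1_f` interpolates to a function of
degree `≤ t`; pairing these with a function of degree `≤ t` vanishing off `1_f` shows that it
vanishes everywhere. An annihilator of degree `t + 1` exists by counting: there are more than
`2^{n-1}` monomials of degree `≤ t + 1`.
-/

open Finset

lemma ZMod.eq_zero_or_eq_one (a : ZMod 2) : a = 0 ∨ a = 1 := by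
  revert a; decide

lemma ZMod.eq_zero_iff_ne_one {a : ZMod 2} : a = 0 ↔ a ≠ 1 := by
  revert a; decide

lemma Finset.natCast_card_Icc_zmod_two {α : Type*} [DecidableEq α] (A B : Finset α) :
    ((#(Icc A B) : ℕ) : ZMod 2) = if A = B then 1 else 0 := by
  by_cases hAB : A ⊆ B
  · rw [card_Icc_finset hAB]
    by_cases h : A = B
    · simp [h]
    · have hlt : #A < #B := card_lt_card (ssubset_of_subset_of_ne hAB h)
      rw [if_neg h, ZMod.natCast_eq_zero_iff_even]
      exact (Nat.even_pow' (by omega)).mpr even_two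
  · have : A ≠ B := by rintro rfl; exact hAB subset_rfl
    rw [Icc_eq_empty (by simpa using hAB), if_neg this, card_empty, Nat.cast_zero]

lemma Fintype.card_finset_card_le {α : Type*} [Fintype α] (d : ℕ) :
    Fintype.card {S : Finset α // #S ≤ d} = ∑ i ∈ range (d + 1), (card α).choose i := by
  rw [Fintype.card_subtype, card_eq_sum_card_fiberwise (f := Finset.card) (t := range (d + 1))
    fun S hS => by simp_all]
  refine Finset.sum_congr rfl fun i hi => ?_
  rw [← card_univ, ← card_powersetCard]
  congr 1
  ext S
  simp_all

lemma Matrix.card_le_card_of_injective_mulVecLin {m k K : Type*} [Fintype m] [Fintype k]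
    [Field K] {A : Matrix m k K} (h : Function.Injective A.mulVecLin) :
    Nat.card k ≤ Nat.card m := by
  simpa [Nat.card_eq_fintype_card] using LinearMap.finrank_le_finrank_of_injective h

namespace BooleanFunction

variable {n : ℕ}

def boolSupport (x : Fin n → ZMod 2) : Finset (Fin n) := {i | x i = 1}

@[simp]
lemma mem_boolSupport {x : Fin n → ZMod 2} {i : Fin n} : i ∈ boolSupport x ↔ x i = 1 := by
  simp [boolSupport]

lemma boolSupport_subset_iff {x : Fin n → ZMod 2} {S : Finset (Fin n)} :
    boolSupport x ⊆ S ↔ ∀ i, x i = 1 → i ∈ S := by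
  simp [subset_iff]

lemma boolSupport_injective : Function.Injective (boolSupport (n := n)) := by
  intro x y h
  funext i
  have hi : x i = 1 ↔ y i = 1 := by rw [← mem_boolSupport, h, mem_boolSupport]
  rcases ZMod.eq_zero_or_eq_one (x i) with hx | hx <;>
    rcases ZMod.eq_zero_or_eq_one (y i) with hy | hy <;> simp_all

lemma prod_eq_ite_subset_boolSupport (S : Finset (Fin n)) (x : Fin n → ZMod 2) :
    ∏ i ∈ S, x i = if S ⊆ boolSupport x then 1 else 0 := by
  split_ifs with h
  · exact prod_eq_one fun i hi => mem_boolSupport.mp (h hi)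
  · obtain ⟨i, hiS, hix⟩ := not_subset.mp h
    exact prod_eq_zero hiS (ZMod.eq_zero_iff_ne_one.mpr (by simpa using hix))

lemma prod_mul_prod_eq_prod_union (S T : Finset (Fin n)) (x : Fin n → ZMod 2) :
    (∏ i ∈ S, x i) * ∏ i ∈ T, x i = ∏ i ∈ S ∪ T, x i := by
  simp only [prod_eq_ite_subset_boolSupport, union_subset_iff]
  split_ifs <;> simp_all

lemma sum_prod_eq_zero_of_ne_univ {U : Finset (Fin n)} (hU : U ≠ univ) :
    ∑ x : Fin n → ZMod 2, ∏ i ∈ U, x i = 0 := by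
  obtain ⟨j, hj⟩ : ∃ j, j ∉ U := by simpa [eq_univ_iff_forall] using hU
  have hext : ∀ x : Fin n → ZMod 2, ∏ i ∈ U, x i = ∏ i, (if i ∈ U then x i else 1) :=
    fun x => (Fintype.prod_ite_mem U x).symm
  simp_rw [hext]
  rw [← Fintype.prod_sum (fun i (a : ZMod 2) => if i ∈ U then a else 1)]
  exact prod_eq_zero (mem_univ j) (by simp [hj]; rfl)

def anfEval (c : Finset (Fin n) → ZMod 2) (x : Fin n → ZMod 2) : ZMod 2 :=
  ∑ S, c S * ∏ i ∈ S, x i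

-- Möbius inversion on the Boolean lattice: the interval `[supp y, supp x]` has odd cardinality
-- only when it is a single point.
theorem anfEval_anfCoeff (f : (Fin n → ZMod 2) → ZMod 2) : anfEval (anfCoeff f) = f := by
  funext x
  have hcount : ∀ y : Fin n → ZMod 2,
      ∑ S, (if boolSupport y ⊆ S ∧ S ⊆ boolSupport x then f y else 0) =
        if y = x then f y else 0 := by
    intro y
    rw [← sum_filter, sum_const, nsmul_eq_mul]
    have hIcc : ({S | boolSupport y ⊆ S ∧ S ⊆ boolSupport x} : Finset _) =
        Icc (boolSupport y) (boolSupport x) := by ext; simp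
    rw [hIcc, natCast_card_Icc_zmod_two]
    simp_rw [boolSupport_injective.eq_iff]
    split_ifs <;> simp
  calc anfEval (anfCoeff f) x
      = ∑ S, ∑ y, if boolSupport y ⊆ S ∧ S ⊆ boolSupport x then f y else 0 := by
        simp only [anfEval, anfCoeff, prod_eq_ite_subset_boolSupport, mul_ite, mul_one, mul_zero,
          sum_filter, boolSupport_subset_iff]
        refine sum_congr rfl fun S _ => ?_
        by_cases hS : S ⊆ boolSupport x <;> simp [hS]
    _ = f x := by rw [sum_comm, sum_congr rfl fun y _ => hcount y, sum_ite_eq' univ x]; simp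

theorem anfEval_bijective : Function.Bijective (anfEval (n := n)) := by
  rw [Fintype.bijective_iff_surjective_and_card]
  exact ⟨fun f => ⟨anfCoeff f, anfEval_anfCoeff f⟩, by simp [Fintype.card_finset]⟩

theorem anfCoeff_anfEval (c : Finset (Fin n) → ZMod 2) : anfCoeff (anfEval c) = c :=
  anfEval_bijective.injective (anfEval_anfCoeff _)

lemma anfCoeff_eq_zero_of_degB_lt {g : (Fin n → ZMod 2) → ZMod 2} {S : Finset (Fin n)}
    (h : degB g < #S) : anfCoeff g S = 0 := by
  by_contra hc
  exact (le_sup (f := Finset.card) (mem_filter.mpr ⟨mem_univ S, hc⟩)).not_gt h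

lemma degB_anfEval_le {c : Finset (Fin n) → ZMod 2} {d : ℕ} (hc : ∀ S, d < #S → c S = 0) :
    degB (anfEval c) ≤ d :=
  Finset.sup_le fun S hS => by
    rw [mem_filter, anfCoeff_anfEval] at hS
    exact not_lt.mp fun h => hS.2 (hc S h)

theorem sum_mul_eq_zero_of_degB_add_lt {g h : (Fin n → ZMod 2) → ZMod 2}
    (hgh : degB g + degB h < n) : ∑ x, g x * h x = 0 := by
  rw [← anfEval_anfCoeff g, ← anfEval_anfCoeff h]
  simp only [anfEval, sum_mul_sum]
  rw [sum_comm]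
  refine sum_eq_zero fun S _ => ?_
  rw [sum_comm]
  refine sum_eq_zero fun T _ => ?_
  by_cases hS : anfCoeff g S = 0
  · simp [hS]
  by_cases hT : anfCoeff h T = 0
  · simp [hT]
  have hST : S ∪ T ≠ univ := by
    intro hU
    have := card_union_le S T
    rw [hU, card_univ, Fintype.card_fin] at this
    have := not_lt.mp (mt anfCoeff_eq_zero_of_degB_lt hS)
    have := not_lt.mp (mt anfCoeff_eq_zero_of_degB_lt hT)
    omega
  have hterm : ∀ x : Fin n → ZMod 2,
      anfCoeff g S * (∏ i ∈ S, x i) * (anfCoeff h T * ∏ i ∈ T, x i) =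
        anfCoeff g S * anfCoeff h T * ∏ i ∈ S ∪ T, x i := fun x => by
    rw [← prod_mul_prod_eq_prod_union]
    ring
  rw [sum_congr rfl fun x _ => hterm x, ← mul_sum, sum_prod_eq_zero_of_ne_univ hST, mul_zero]

def lowDegEval (d : ℕ) (c : {S : Finset (Fin n) // #S ≤ d} → ZMod 2) (x : Fin n → ZMod 2) :
    ZMod 2 :=
  ∑ S, c S * ∏ i ∈ S.1, x i

lemma lowDegEval_eq_anfEval (d : ℕ) (c : {S : Finset (Fin n) // #S ≤ d} → ZMod 2) :
    lowDegEval d c = anfEval fun S => if h : #S ≤ d then c ⟨S, h⟩ else 0 := by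
  funext x
  rw [anfEval, ← Fintype.sum_subtype_add_sum_subtype (fun S : Finset (Fin n) => #S ≤ d)]
  have hhigh : ∑ S : {S : Finset (Fin n) // ¬#S ≤ d},
      (if h : #S.1 ≤ d then c ⟨S, h⟩ else 0) * ∏ i ∈ S.1, x i = 0 :=
    Fintype.sum_eq_zero _ fun S => by rw [dif_neg S.2, zero_mul]
  rw [hhigh, add_zero]
  exact sum_congr rfl fun S _ => by rw [dif_pos S.2]

@[simp]
lemma lowDegEval_zero (d : ℕ) : lowDegEval (n := n) d 0 = 0 := by
  funext x
  simp [lowDegEval]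

lemma degB_lowDegEval_le (d : ℕ) (c : {S : Finset (Fin n) // #S ≤ d} → ZMod 2) :
    degB (lowDegEval d c) ≤ d :=
  lowDegEval_eq_anfEval d c ▸ degB_anfEval_le fun _ hS => dif_neg hS.not_ge

lemma lowDegEval_injective (d : ℕ) : Function.Injective (lowDegEval (n := n) d) := by
  intro c c' h
  funext S
  simpa [lowDegEval_eq_anfEval, anfCoeff_anfEval, S.2] using congrArg (anfCoeff · S.1) h

lemma lowDegEval_anfCoeff {g : (Fin n → ZMod 2) → ZMod 2} {d : ℕ} (h : degB g ≤ d) :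
    lowDegEval d (fun S => anfCoeff g S.1) = g := by
  conv_rhs => rw [← anfEval_anfCoeff g]
  rw [lowDegEval_eq_anfEval]
  congr 1
  funext S
  split_ifs with hS
  · rfl
  · exact (anfCoeff_eq_zero_of_degB_lt (by omega)).symm

lemma mulVecLin_VSet_apply (d : ℕ) (T : Set (Fin n → ZMod 2))
    (c : {S : Finset (Fin n) // #S ≤ d} → ZMod 2) (x : T) :
    (VSet d T).mulVecLin c x = lowDegEval d c x := by
  simp only [Matrix.mulVecLin_apply, Matrix.mulVec, dotProduct, VSet, lowDegEval, mul_comm]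

theorem injective_mulVecLin_VSet_iff {d : ℕ} {T : Set (Fin n → ZMod 2)} :
    Function.Injective (VSet d T).mulVecLin ↔
      ∀ g : (Fin n → ZMod 2) → ZMod 2, degB g ≤ d → (∀ x ∈ T, g x = 0) → g = 0 := by
  rw [injective_iff_map_eq_zero]
  constructor
  · intro h g hg hT
    have hc : (VSet d T).mulVecLin (fun S => anfCoeff g S.1) = 0 := by
      funext x
      rw [mulVecLin_VSet_apply, lowDegEval_anfCoeff hg]
      exact hT x x.2
    rw [← lowDegEval_anfCoeff hg, h _ hc, lowDegEval_zero]
  · intro h c hc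
    refine lowDegEval_injective d ((h _ (degB_lowDegEval_le d c) fun x hx => ?_).trans
      (lowDegEval_zero d).symm)
    rw [← mulVecLin_VSet_apply d T c ⟨x, hx⟩, hc, Pi.zero_apply]

theorem injective_mulVecLin_VSet_compl {t : ℕ} (hn : n = 2 * t + 1) {T : Set (Fin n → ZMod 2)}
    (hT : Function.Surjective (VSet t T).mulVecLin) :
    Function.Injective (VSet t Tᶜ).mulVecLin := by
  rw [injective_mulVecLin_VSet_iff]
  intro g hg hgT
  funext x₀
  by_cases hx₀ : x₀ ∉ T
  · exact hgT x₀ hx₀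
  rw [not_not] at hx₀
  obtain ⟨c, hc⟩ := hT (Pi.single ⟨x₀, hx₀⟩ 1)
  have hδ : ∀ x ∈ T, lowDegEval t c x = if x = x₀ then 1 else 0 := fun x hx => by
    rw [← mulVecLin_VSet_apply t T c ⟨x, hx⟩, hc]
    simp [Pi.single_apply, Subtype.ext_iff]
  calc g x₀ = ∑ x, g x * lowDegEval t c x := by
        rw [sum_eq_single x₀ (fun x _ hx => ?_) (fun h => absurd (mem_univ x₀) h),
          hδ x₀ hx₀, if_pos rfl, mul_one]
        by_cases hxT : x ∈ T
        · rw [hδ x hxT, if_neg hx, mul_zero]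
        · rw [hgT x hxT, zero_mul]
    _ = 0 := sum_mul_eq_zero_of_degB_add_lt (by have := degB_lowDegEval_le t c; omega)

lemma card_finset_card_le_eq_two_pow {t : ℕ} (hn : n = 2 * t + 1) :
    Fintype.card {S : Finset (Fin n) // #S ≤ t} = 2 ^ (n - 1) := by
  rw [Fintype.card_finset_card_le, Fintype.card_fin, hn, Nat.sum_range_choose_halfway,
    Nat.add_sub_cancel, pow_mul]
  rfl

lemma two_pow_lt_card_finset_card_le_succ {t : ℕ} (hn : n = 2 * t + 1) :
    2 ^ (n - 1) < Fintype.card {S : Finset (Fin n) // #S ≤ t + 1} := by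
  rw [Fintype.card_finset_card_le, sum_range_succ, ← Fintype.card_finset_card_le,
    card_finset_card_le_eq_two_pow hn, Fintype.card_fin]
  exact Nat.lt_add_of_pos_right (Nat.choose_pos (by omega))

lemma isAnnihilator_iff {f g : (Fin n → ZMod 2) → ZMod 2} :
    IsAnnihilator f g ↔ g ≠ 0 ∧ ∀ x ∈ {x | f x = 1}, g x = 0 := by
  refine and_congr_right fun _ => forall_congr' fun x => ?_
  rcases ZMod.eq_zero_or_eq_one (f x) with hx | hx <;> simp [hx]

lemma isAnnihilator_add_one_iff {f g : (Fin n → ZMod 2) → ZMod 2} :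
    IsAnnihilator (fun x => f x + 1) g ↔ g ≠ 0 ∧ ∀ x ∈ {x | f x = 1}ᶜ, g x = 0 := by
  rw [isAnnihilator_iff]
  simp [ZMod.eq_zero_iff_ne_one]

lemma exists_isAnnihilator_degB_le_of_card_lt {f : (Fin n → ZMod 2) → ZMod 2} {d : ℕ}
    (h : Nat.card {x // f x = 1} < Fintype.card {S : Finset (Fin n) // #S ≤ d}) :
    ∃ g, IsAnnihilator f g ∧ degB g ≤ d := by
  have hni : ¬ Function.Injective (VSet d {x | f x = 1}).mulVecLin := fun hinj =>
    (Matrix.card_le_card_of_injective_mulVecLin hinj).not_gt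
      (by rw [Nat.card_eq_fintype_card (α := {S : Finset (Fin n) // #S ≤ d})]; exact h)
  simp only [injective_mulVecLin_VSet_iff, not_forall] at hni
  obtain ⟨g, hg, hT, h0⟩ := hni
  exact ⟨g, isAnnihilator_iff.mpr ⟨h0, hT⟩, hg⟩

lemma forall_isAnnihilator_lt_degB_iff {f : (Fin n → ZMod 2) → ZMod 2} {d : ℕ} :
    (∀ g, IsAnnihilator f g ∨ IsAnnihilator (fun x => f x + 1) g → d < degB g) ↔
      Function.Injective (VSet d {x | f x = 1}).mulVecLin ∧
        Function.Injective (VSet d {x | f x = 1}ᶜ).mulVecLin := by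
  simp only [isAnnihilator_add_one_iff]
  simp only [injective_mulVecLin_VSet_iff, isAnnihilator_iff]
  constructor
  · intro h
    constructor <;> intro g hg hT <;> by_contra h0
    exacts [(h g (.inl ⟨h0, hT⟩)).not_ge hg, (h g (.inr ⟨h0, hT⟩)).not_ge hg]
  · rintro ⟨h1, h0⟩ g (⟨hg, hT⟩ | ⟨hg, hT⟩) <;> refine lt_of_not_ge fun hd => hg ?_
    exacts [h1 g hd hT, h0 g hd hT]

theorem AI_eq_succ_iff {f : (Fin n → ZMod 2) → ZMod 2} {d : ℕ} :
    AI f = d + 1 ↔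
      (∀ g, IsAnnihilator f g ∨ IsAnnihilator (fun x => f x + 1) g → d < degB g) ∧
        ∃ g, (IsAnnihilator f g ∨ IsAnnihilator (fun x => f x + 1) g) ∧ degB g ≤ d + 1 := by
  unfold AI
  set A := {d | ∃ g, (IsAnnihilator f g ∨ IsAnnihilator (fun x => f x + 1) g) ∧ degB g = d}
  constructor
  · intro h
    refine ⟨fun g hg => ?_, ?_⟩
    · have := Nat.sInf_le (s := A) ⟨g, hg, rfl⟩
      omega
    · obtain ⟨g, hg, hdeg⟩ := Nat.sInf_mem (s := A) (Nat.nonempty_of_pos_sInf (by omega))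
      exact ⟨g, hg, by omega⟩
  · rintro ⟨hlow, g, hg, hdeg⟩
    refine IsLeast.csInf_eq ⟨⟨g, hg, le_antisymm hdeg (hlow g hg)⟩, ?_⟩
    rintro _ ⟨g', hg', rfl⟩
    exact hlow g' hg'

end BooleanFunction

open BooleanFunction

/-- for odd `n = 2t+1`, `AI(f) = t+1` iff `f` is balanced and the
`2^{n-1} × 2^{n-1}` matrix `V(1_f)` over `F_2` is invertible. -/
theorem stmt_2 (n t : ℕ) (hn : n = 2 * t + 1) (f : (Fin n → ZMod 2) → ZMod 2) :
    AI f = t + 1 ↔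
      (Nat.card {x : Fin n → ZMod 2 // f x = 1} = 2 ^ (n - 1) ∧
        Function.Bijective (Matrix.mulVecLin (VSet t {x | f x = 1}))) := by
  have hM := card_finset_card_le_eq_two_pow hn
  have hsplit : Nat.card {x | f x = 1} + Nat.card ({x | f x = 1}ᶜ : Set (Fin n → ZMod 2)) =
      2 * 2 ^ (n - 1) := by
    rw [Nat.card_coe_set_eq, Nat.card_coe_set_eq, Set.ncard_add_ncard_compl,
      Nat.card_eq_fintype_card]
    simp [hn, pow_succ']
  rw [AI_eq_succ_iff, forall_isAnnihilator_lt_degB_iff]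
  constructor
  · rintro ⟨⟨h1, h0⟩, -⟩
    have c1 := Matrix.card_le_card_of_injective_mulVecLin h1
    have c0 := Matrix.card_le_card_of_injective_mulVecLin h0
    rw [Nat.card_eq_fintype_card (α := {S : Finset (Fin n) // _}), hM] at c1 c0
    have hbal : Nat.card {x | f x = 1} = 2 ^ (n - 1) := by omega
    refine ⟨hbal, h1, (LinearMap.injective_iff_surjective_of_finrank_eq_finrank ?_).mp h1⟩
    rw [Module.finrank_fintype_fun_eq_card, Module.finrank_fintype_fun_eq_card, hM,
      ← Nat.card_eq_fintype_card, hbal]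
  · rintro ⟨hbal, hbij⟩
    refine ⟨⟨hbij.1, injective_mulVecLin_VSet_compl hn hbij.2⟩, ?_⟩
    obtain ⟨g, hg, hdeg⟩ :=
      exists_isAnnihilator_degB_le_of_card_lt (hbal.trans_lt (two_pow_lt_card_finset_card_le_succ hn))
    exact ⟨g, .inl hg, hdeg⟩
end

section
/- Let n = 2t+1 be an odd positive integer, a ∈ F_2, and let f be the Boolean function of n variables defined by f(X) = a if wt(X) ≤ t and f(X) = a⊕1 if wt(X) > t, where wt(X) is the number of coordinates of X equal to 1. Then AI(f) = t+1. -/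
/-!
The coefficient `anfCoeff g S` is the sum of `g` over the subcube `{x | supp x ⊆ S}`, so
`degB g ≤ t` says that `g` sums to zero over every such subcube of dimension `> t`. If moreover
`g` vanishes at all points of weight `≤ t`, then, by induction on the weight, the subcube below a
point `x` of weight `> t` shows `g x = 0`. The complement map `x ↦ x + 1` does not increase the
degree (expand `∏_{i ∉ S} x i = ∏_{i ∉ S} (1 + (x i + 1))`) and, for `n = 2t + 1`, exchanges the
weights `≤ t` and `> t`; hence a nonzero annihilator of `f` or `f + 1` has degree `≥ t + 1`.
Conversely `∏_{i ∈ F} (x i + 1)` with `|F| = t + 1` has degree `≤ t + 1` and vanishes at every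
point of weight `> t`, because its support must meet `F`.
-/

namespace BooleanFunction

variable {n : ℕ}

open Finset

theorem zmod2_eq_zero_or_eq_one (a : ZMod 2) : a = 0 ∨ a = 1 := by
  revert a; decide

def supp (x : Fin n → ZMod 2) : Finset (Fin n) := univ.filter (fun i => x i = 1)

theorem mem_supp {x : Fin n → ZMod 2} {i : Fin n} : i ∈ supp x ↔ x i = 1 := by
  simp [supp]

theorem wtB_eq_card_supp (x : Fin n → ZMod 2) : wtB x = (supp x).card := rfl

theorem supp_injective : Function.Injective (supp : (Fin n → ZMod 2) → Finset (Fin n)) := by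
  intro x y h
  funext i
  have hi : x i = 1 ↔ y i = 1 := by rw [← mem_supp, ← mem_supp, h]
  rcases zmod2_eq_zero_or_eq_one (x i) with hx | hx <;>
    rcases zmod2_eq_zero_or_eq_one (y i) with hy | hy <;> simp_all

theorem supp_add_one (x : Fin n → ZMod 2) : supp (x + 1) = (supp x)ᶜ := by
  ext i
  rcases zmod2_eq_zero_or_eq_one (x i) with h | h <;> simp [mem_supp, h]

theorem wtB_add_one (x : Fin n → ZMod 2) : wtB (x + 1) = n - wtB x := by
  rw [wtB_eq_card_supp, wtB_eq_card_supp, supp_add_one, card_compl, Fintype.card_fin]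

theorem prod_add_one_eq_ite (A : Finset (Fin n)) (x : Fin n → ZMod 2) :
    ∏ i ∈ A, (x i + 1) = if ∀ i ∈ A, x i = 0 then 1 else 0 := by
  trans ∏ i ∈ A, if x i = 0 then (1 : ZMod 2) else 0
  · refine prod_congr rfl fun i _ => ?_
    rcases zmod2_eq_zero_or_eq_one (x i) with h | h <;> simp [h]; decide
  · convert prod_boole

theorem anfCoeff_eq_sum_filter_supp_subset (g : (Fin n → ZMod 2) → ZMod 2) (S : Finset (Fin n)) :
    anfCoeff g S = ∑ x ∈ univ.filter (fun x => supp x ⊆ S), g x := by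
  simp only [anfCoeff, subset_iff, mem_supp]

theorem anfCoeff_eq_sum_mul (g : (Fin n → ZMod 2) → ZMod 2) (S : Finset (Fin n)) :
    anfCoeff g S = ∑ x, (∏ i ∈ Sᶜ, (x i + 1)) * g x := by
  rw [anfCoeff, sum_filter]
  refine sum_congr rfl fun x _ => ?_
  have hcond : (∀ i ∈ Sᶜ, x i = 0) ↔ ∀ i, x i = 1 → i ∈ S := by
    refine forall_congr' fun i => ?_
    rcases zmod2_eq_zero_or_eq_one (x i) with h | h <;> simp [h]
  simp only [prod_add_one_eq_ite, hcond, ite_mul, one_mul, zero_mul]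

theorem degB_le_iff {g : (Fin n → ZMod 2) → ZMod 2} {d : ℕ} :
    degB g ≤ d ↔ ∀ S : Finset (Fin n), d < S.card → anfCoeff g S = 0 := by
  simp only [degB, Finset.sup_le_iff, mem_filter, mem_univ, true_and]
  exact forall_congr' fun S => not_imp_comm.trans (by rw [not_le])

theorem add_one_add_one (x : Fin n → ZMod 2) : x + 1 + 1 = x := by
  funext i
  simp only [Pi.add_apply, Pi.one_apply, add_assoc, CharTwo.add_self_eq_zero, add_zero]

theorem degB_comp_add_one_le (g : (Fin n → ZMod 2) → ZMod 2) :
    degB (fun x => g (x + 1)) ≤ degB g := by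
  rw [degB_le_iff]
  intro S hS
  have hexpand (z : Fin n → ZMod 2) : ∏ i ∈ Sᶜ, z i = ∑ U ∈ Sᶜ.powerset, ∏ i ∈ U, (z i + 1) := by
    rw [← prod_one_add]
    refine prod_congr rfl fun i _ => ?_
    rw [add_left_comm, CharTwo.add_self_eq_zero, add_zero]
  calc anfCoeff (fun x => g (x + 1)) S
      = ∑ x, (∏ i ∈ Sᶜ, (x i + 1)) * g (x + 1) := anfCoeff_eq_sum_mul _ _
    _ = ∑ z, (∏ i ∈ Sᶜ, z i) * g z := Fintype.sum_equiv (Equiv.addRight 1) _ _ fun x => rfl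
    _ = ∑ U ∈ Sᶜ.powerset, ∑ z, (∏ i ∈ U, (z i + 1)) * g z := by
        simp only [hexpand, sum_mul]
        exact sum_comm
    _ = ∑ U ∈ Sᶜ.powerset, anfCoeff g Uᶜ := by simp only [anfCoeff_eq_sum_mul, compl_compl]
    _ = 0 := sum_eq_zero fun U hU => degB_le_iff.1 le_rfl _
          (hS.trans_le (card_le_card (subset_compl_comm.1 (mem_powerset.1 hU))))

theorem eq_zero_of_degB_le_of_forall_wtB_le {g : (Fin n → ZMod 2) → ZMod 2} {t : ℕ}
    (hd : degB g ≤ t) (hv : ∀ x, wtB x ≤ t → g x = 0) : g = 0 := by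
  funext x
  induction hw : wtB x using Nat.strong_induction_on generalizing x with
  | _ w ih =>
    by_cases hwt : w ≤ t
    · exact hv x (hw ▸ hwt)
    have hx := degB_le_iff.1 hd (supp x) (by rw [← wtB_eq_card_supp, hw]; omega)
    rwa [anfCoeff_eq_sum_filter_supp_subset, sum_eq_single_of_mem x (by simp) fun y hy hyx => ?_]
      at hx
    rw [mem_filter] at hy
    exact ih _ (hw ▸ card_lt_card (ssubset_of_subset_of_ne hy.2 (supp_injective.ne hyx))) y rfl

theorem eq_zero_of_degB_le_of_forall_lt_wtB {g : (Fin n → ZMod 2) → ZMod 2} {t : ℕ}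
    (hn : 2 * t < n) (hd : degB g ≤ t) (hv : ∀ x, t < wtB x → g x = 0) : g = 0 := by
  have hcomp : (fun x => g (x + 1)) = 0 :=
    eq_zero_of_degB_le_of_forall_wtB_le ((degB_comp_add_one_le g).trans hd) fun x hx =>
      hv _ (by rw [wtB_add_one]; omega)
  funext x
  simpa [add_one_add_one] using congrFun hcomp (x + 1)

theorem anfCoeff_eq_zero_of_forall_add_single {g : (Fin n → ZMod 2) → ZMod 2} {S : Finset (Fin n)}
    {j : Fin n} (hj : j ∈ S) (hg : ∀ x, g (x + Pi.single j 1) = g x) : anfCoeff g S = 0 := by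
  rw [anfCoeff_eq_sum_filter_supp_subset]
  refine sum_involution (fun x _ => x + Pi.single j 1)
    (fun x _ => by rw [hg, CharTwo.add_self_eq_zero]) (fun x _ _ h => ?_) (fun x hx => ?_)
    (fun x _ => ?_)
  · simpa using congrFun h j
  · simp only [mem_filter, mem_univ, true_and, subset_iff, mem_supp] at hx ⊢
    intro i hi
    by_cases hij : i = j
    · exact hij ▸ hj
    · exact hx (by simpa [Pi.single_eq_of_ne hij] using hi)
  · rw [add_assoc, ← Pi.single_add, CharTwo.add_self_eq_zero, Pi.single_zero, add_zero]

theorem degB_prod_add_one_le (F : Finset (Fin n)) :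
    degB (fun x : Fin n → ZMod 2 => ∏ i ∈ F, (x i + 1)) ≤ F.card := by
  rw [degB_le_iff]
  intro S hS
  obtain ⟨j, hjS, hjF⟩ := not_subset.1 fun h => (card_le_card h).not_gt hS
  refine anfCoeff_eq_zero_of_forall_add_single hjS fun x => prod_congr rfl fun i hi => ?_
  rw [Pi.add_apply, Pi.single_eq_of_ne (ne_of_mem_of_not_mem hi hjF), add_zero]

theorem AI_eq_of_exists_of_forall {f : (Fin n → ZMod 2) → ZMod 2} {d : ℕ}
    (hex : ∃ g, (IsAnnihilator f g ∨ IsAnnihilator (fun x => f x + 1) g) ∧ degB g ≤ d)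
    (hle : ∀ g, IsAnnihilator f g ∨ IsAnnihilator (fun x => f x + 1) g → d ≤ degB g) :
    AI f = d := by
  obtain ⟨g, hg, hdeg⟩ := hex
  unfold AI
  have hmem : degB g ∈ {d | ∃ g, (IsAnnihilator f g ∨ IsAnnihilator (fun x => f x + 1) g) ∧
      degB g = d} := ⟨g, hg, rfl⟩
  refine le_antisymm ((Nat.sInf_le hmem).trans hdeg) (le_csInf ⟨_, hmem⟩ ?_)
  rintro _ ⟨g', hg', rfl⟩
  exact hle g' hg'

def thresholdFun (t : ℕ) (a : ZMod 2) (x : Fin n → ZMod 2) : ZMod 2 :=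
  if wtB x ≤ t then a else a + 1

theorem thresholdFun_add_one (t : ℕ) (a : ZMod 2) :
    (fun x => thresholdFun t a x + 1) = (thresholdFun t (a + 1) : (Fin n → ZMod 2) → ZMod 2) := by
  funext x
  unfold thresholdFun
  split_ifs <;> rfl

theorem lt_degB_of_isAnnihilator_thresholdFun {t : ℕ} {a : ZMod 2} {g : (Fin n → ZMod 2) → ZMod 2}
    (hn : 2 * t < n) (hg : IsAnnihilator (thresholdFun t a) g) : t < degB g := by
  obtain ⟨hne, hmul⟩ := hg
  by_contra! hd
  refine hne ?_
  rcases zmod2_eq_zero_or_eq_one a with rfl | rfl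
  · exact eq_zero_of_degB_le_of_forall_lt_wtB hn hd fun x hx => by
      simpa [thresholdFun, hx.not_ge] using hmul x
  · exact eq_zero_of_degB_le_of_forall_wtB_le hd fun x hx => by
      simpa [thresholdFun, hx] using hmul x

theorem isAnnihilator_thresholdFun_zero {t : ℕ} (hn : n ≤ 2 * t + 1) {F : Finset (Fin n)}
    (hF : F.card = t + 1) :
    IsAnnihilator (thresholdFun t 0) (fun x : Fin n → ZMod 2 => ∏ i ∈ F, (x i + 1)) := by
  refine ⟨fun h => by simpa using congrFun h 0, fun x => ?_⟩
  unfold thresholdFun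
  split_ifs with hx
  · exact zero_mul _
  dsimp only
  obtain ⟨i, hi⟩ : (F ∩ supp x).Nonempty :=
    inter_nonempty_of_card_lt_card_add_card (subset_univ _) (subset_univ _)
      (by rw [card_univ, Fintype.card_fin, hF, ← wtB_eq_card_supp]; omega)
  obtain ⟨hiF, hix⟩ := mem_inter.1 hi
  rw [prod_eq_zero hiF (by rw [mem_supp.1 hix]; rfl), mul_zero]

end BooleanFunction

open BooleanFunction

/-- the majority-type function (`a` on weight `≤ t`, `a ⊕ 1` on weight `> t`)
has maximum algebraic immunity `t+1`. -/
theorem stmt_3 (n t : ℕ) (hn : n = 2 * t + 1) (a : ZMod 2) :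
    AI (fun X : Fin n → ZMod 2 => if wtB X ≤ t then a else a + 1) = t + 1 := by
  change AI (thresholdFun t a) = t + 1
  refine AI_eq_of_exists_of_forall ?_ fun g hg => ?_
  · obtain ⟨F, -, hF⟩ := Finset.exists_subset_card_eq (s := Finset.univ (α := Fin n)) (n := t + 1)
      (by rw [Finset.card_univ, Fintype.card_fin]; omega)
    refine ⟨_, ?_, hF ▸ degB_prod_add_one_le F⟩
    rw [thresholdFun_add_one]
    rcases zmod2_eq_zero_or_eq_one a with rfl | rfl
    · exact Or.inl (isAnnihilator_thresholdFun_zero hn.le hF)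
    · exact Or.inr (isAnnihilator_thresholdFun_zero hn.le hF)
  · rw [thresholdFun_add_one] at hg
    exact hg.elim (lt_degB_of_isAnnihilator_thresholdFun (by omega))
      (lt_degB_of_isAnnihilator_thresholdFun (by omega))
end

section
/- Let n = 2t+1 be an odd positive integer, let F be a Boolean function of n variables with AI(F) = t+1, enumerate 1_F = {Y_1,…,Y_{2^{n−1}}} and 0_F = {Z_1,…,Z_{2^{n−1}}}, and set W = V(0_F)·V(1_F)^{−1}. Then every Boolean function f of n variables with AI(f) = t+1 arises as follows: there exist an integer 0 ≤ k ≤ 2^{n−1}, integers 1 ≤ i_1 < … < i_k ≤ 2^{n−1} and 1 ≤ j_1 < … < j_k ≤ 2^{n−1} such that the k × k submatrix of W with rows i_1,…,i_k and columns j_1,…,j_k is invertible (the empty 0×0 matrix being invertible by convention), and f is obtained from F by flipping the values at the points Z_{i_1},…,Z_{i_k}, Y_{j_1},…,Y_{j_k} (i.e., f(X) = F(X)⊕1 on these points and f(X) = F(X) elsewhere). -/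
/-!
Since `AI f > t`, no nonzero polynomial of degree `≤ t` vanishes on `1_f`, so the evaluation
matrix `V` of any family of points covering `1_f` has full column rank `2^(n-1)`, the number of
monomials of degree `≤ t`. Applied to `f` and `f ⊕ 1` this shows that `f` is balanced, hence it
differs from `F` on equally many points `Z_{i_a}` of `0_F` and `Y_{j_a}` of `1_F`.
Let `M` be the matrix whose row `j_a` is row `i_a` of `W` and whose other rows are rows of the
identity. Then `M · V(1_F)` is `V` of the enumeration of `1_F` in which each `Y_{j_a}` is
replaced by `Z_{i_a}`; that enumeration covers `1_f`, so `M` has full rank, and expanding along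
the identity rows gives `det M = det W[i, j]`.
-/

open Finset

namespace Matrix

variable {ι κ R : Type*} [Fintype ι] [DecidableEq ι] [CommRing R] {j : κ → ι}

lemma of_extend_single_mul {o : Type*} (hj : Function.Injective j) (g : κ → ι → R)
    (B : Matrix ι o R) :
    of (Function.extend j g fun r => Pi.single r 1) * B =
      of (Function.extend j (fun a => g a ᵥ* B) B) := by
  ext r s
  by_cases h : ∃ a, j a = r
  · obtain ⟨a, rfl⟩ := h
    simp only [mul_apply, of_apply, hj.extend_apply (e' := (B : ι → o → R)),
      hj.extend_apply (e' := fun r => (Pi.single r 1 : ι → R))]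
    rfl
  · simp [mul_apply, Function.extend_apply' (e' := (B : ι → o → R)) _ _ h,
      Function.extend_apply' (e' := fun r => (Pi.single r 1 : ι → R)) _ _ h, Pi.single_apply]

lemma det_of_extend_single [Fintype κ] [DecidableEq κ] (hj : Function.Injective j)
    (g : κ → ι → R) :
    (of (Function.extend j g fun r => Pi.single r 1)).det = (of fun a b => g a (j b)).det := by
  let e : κ ⊕ {r // r ∉ Set.range j} ≃ ι :=
    (Equiv.sumCongr (Equiv.ofInjective j hj) (Equiv.refl _)).trans (Equiv.sumCompl _)
  have hblocks : (of (Function.extend j g fun r => Pi.single r 1)).submatrix e e =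
      fromBlocks (of fun a b => g a (j b)) (of fun a y => g a y.1) 0 1 := by
    ext (a | x) (b | y)
    · simp [e, hj.extend_apply]
    · simp [e, hj.extend_apply]
    · simp only [e, Equiv.trans_apply, Equiv.sumCongr_apply, Sum.map_inl, Equiv.sumCompl_apply_inl,
        Equiv.sumCompl_apply_inr, Sum.map_inr, Equiv.refl_apply, submatrix_apply, of_apply,
        Function.extend_apply' _ _ _ x.2, fromBlocks_apply₂₁, zero_apply]
      exact Pi.single_eq_of_ne (fun h : j b = x => x.2 ⟨b, h⟩) _
    · simp [e, Function.extend_apply' _ _ _ x.2, one_apply, Pi.single_apply, Subtype.ext_iff,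
        eq_comm]
  rw [← det_submatrix_equiv_self e, hblocks, det_fromBlocks_zero₂₁, det_one, mul_one]

lemma isUnit_of_rank_mul_eq_card {K o : Type*} [Fintype o] [Field K] {A : Matrix ι ι K}
    {B : Matrix ι o K} (h : (A * B).rank = Fintype.card ι) : IsUnit A := by
  have hA : A.rank = Fintype.card ι := le_antisymm A.rank_le_card_width (h ▸ rank_mul_le_left A B)
  rw [← mulVec_surjective_iff_isUnit, ← coe_mulVecLin, ← LinearMap.range_eq_top]
  exact Submodule.eq_top_of_finrank_eq (hA.trans (Module.finrank_fintype_fun_eq_card K).symm)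

end Matrix

lemma Finset.card_preimage_of_subset_range {α β : Type*} {e : α → β} (he : Function.Injective e)
    {s : Finset β} (hs : ∀ x ∈ s, x ∈ Set.range e) : #(s.preimage e he.injOn) = #s := by
  classical
  rw [card_preimage, filter_true_of_mem hs]

lemma Finset.exists_apply_orderEmbOfFin_preimage_eq_iff {α β : Type*} [LinearOrder α]
    {e : α → β} (he : Function.Injective e) {s : Finset β} (hs : ∀ x ∈ s, x ∈ Set.range e)
    {k : ℕ} (h : #(s.preimage e he.injOn) = k) (x : β) :
    (∃ a, e ((s.preimage e he.injOn).orderEmbOfFin h a) = x) ↔ x ∈ s := by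
  change x ∈ Set.range (e ∘ _) ↔ _
  rw [Set.range_comp, range_orderEmbOfFin, coe_preimage, Set.image_preimage_eq_of_subset hs,
    mem_coe]

namespace BooleanFunction

variable {n t : ℕ}

lemma zmod_two_ne_one_iff {a : ZMod 2} : a ≠ 1 ↔ a = 0 := by
  revert a; decide

lemma anfCoeff_monomial (T S : Finset (Fin n)) :
    anfCoeff (fun x => ∏ i ∈ T, x i) S = if T = S then 1 else 0 := by
  -- The `x` with support in `S` form a box, over which the sum factorises coordinatewise.
  have hbox : univ.filter (fun x : Fin n → ZMod 2 => ∀ i, x i = 1 → i ∈ S) =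
      Fintype.piFinset fun i => if i ∈ S then univ else {0} := by
    ext x
    simp only [mem_filter, mem_univ, true_and, Fintype.mem_piFinset]
    refine forall_congr' fun i => ?_
    split_ifs with h <;> simp [h, ← zmod_two_ne_one_iff]
  have hfactor (i : Fin n) : ∑ a ∈ (if i ∈ S then univ else {0}), (if i ∈ T then a else 1) =
      if (i ∈ T ↔ i ∈ S) then (1 : ZMod 2) else 0 := by
    by_cases hS : i ∈ S <;> by_cases hT : i ∈ T <;> simp [hS, hT] <;> decide
  rw [anfCoeff, hbox]
  simp_rw [← Fintype.prod_ite_mem T]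
  rw [← prod_univ_sum _ fun i a => if i ∈ T then a else 1]
  simp only [hfactor, Fintype.prod_boole, ← Finset.ext_iff]

abbrev LowMonomial (n t : ℕ) := {S : Finset (Fin n) // S.card ≤ t}

def anfFun (t : ℕ) (c : LowMonomial n t → ZMod 2) : (Fin n → ZMod 2) → ZMod 2 :=
  fun x => ∑ S, (∏ i ∈ S.1, x i) * c S

lemma anfCoeff_anfFun (c : LowMonomial n t → ZMod 2) (S : Finset (Fin n)) :
    anfCoeff (anfFun t c) S = if h : S.card ≤ t then c ⟨S, h⟩ else 0 := by
  have hlin : anfCoeff (anfFun t c) S =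
      ∑ T : LowMonomial n t, anfCoeff (fun x => ∏ i ∈ T.1, x i) S * c T := by
    simp only [anfCoeff, anfFun, Finset.sum_mul]
    exact Finset.sum_comm
  rw [hlin]
  simp only [anfCoeff_monomial, ite_mul, one_mul, zero_mul]
  split_ifs with h
  · rw [Fintype.sum_eq_single ⟨S, h⟩ fun T hT => if_neg fun h' => hT (Subtype.ext h'), if_pos rfl]
  · exact Finset.sum_eq_zero fun T _ => if_neg fun (hT : T.1 = S) => h (hT ▸ T.2)

lemma anfFun_ne_zero {c : LowMonomial n t → ZMod 2} (hc : c ≠ 0) : anfFun t c ≠ 0 := by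
  obtain ⟨S, hS⟩ := Function.ne_iff.1 hc
  intro h
  have hcoeff := anfCoeff_anfFun c S.1
  rw [h, dif_pos S.2] at hcoeff
  simp only [anfCoeff, Pi.zero_apply, sum_const_zero, Subtype.coe_eta] at hcoeff
  exact hS hcoeff.symm

lemma degB_anfFun_le (c : LowMonomial n t → ZMod 2) : degB (anfFun t c) ≤ t :=
  Finset.sup_le fun S hS => by
    by_contra h
    simp [anfCoeff_anfFun, h] at hS

lemma AI_le_degB {f g : (Fin n → ZMod 2) → ZMod 2} (h : IsAnnihilator f g) : AI f ≤ degB g :=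
  Nat.sInf_le ⟨g, Or.inl h, rfl⟩

lemma AI_add_one (f : (Fin n → ZMod 2) → ZMod 2) : AI (fun x => f x + 1) = AI f := by
  have hinv : (fun x => f x + 1 + 1) = f :=
    funext fun x => by rw [add_assoc, CharTwo.add_self_eq_zero, add_zero]
  simp only [AI, hinv, or_comm]

lemma eq_zero_of_anfFun_eq_zero_on_onset {f : (Fin n → ZMod 2) → ZMod 2} (hf : t < AI f)
    {c : LowMonomial n t → ZMod 2} (hc : ∀ x, f x = 1 → anfFun t c x = 0) : c = 0 := by
  by_contra hc0
  have hann : IsAnnihilator f (anfFun t c) := by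
    refine ⟨anfFun_ne_zero hc0, fun x => ?_⟩
    by_cases hx : f x = 1
    · simp [hc x hx]
    · simp [zmod_two_ne_one_iff.1 hx]
  have := AI_le_degB hann
  have := degB_anfFun_le c
  omega

-- The matrix `V` with rows indexed by an arbitrary type: `VEnum t E` is `evalMatrix t E`.
def evalMatrix (t : ℕ) {ι : Type*} (E : ι → Fin n → ZMod 2) :
    Matrix ι (LowMonomial n t) (ZMod 2) :=
  Matrix.of fun r S => ∏ i ∈ S.1, E r i

lemma rank_evalMatrix {ι : Type*} [Fintype ι] {f : (Fin n → ZMod 2) → ZMod 2} (hf : t < AI f)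
    {E : ι → Fin n → ZMod 2} (hE : ∀ x, f x = 1 → x ∈ Set.range E) :
    (evalMatrix t E).rank = Fintype.card (LowMonomial n t) := by
  rw [Matrix.rank, LinearMap.finrank_range_of_inj, Module.finrank_fintype_fun_eq_card]
  refine (injective_iff_map_eq_zero _).2 fun c hc => eq_zero_of_anfFun_eq_zero_on_onset hf ?_
  intro x hx
  obtain ⟨r, rfl⟩ := hE x hx
  exact congrFun hc r

lemma card_lowMonomial_of_odd (hn : n = 2 * t + 1) :
    Fintype.card (LowMonomial n t) = 2 ^ (n - 1) := by
  have hcompl := Fintype.card_congr <| (compl_involutive.toPerm _).subtypeEquiv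
    (p := fun S : Finset (Fin n) => S.card ≤ t) (q := fun S => ¬ S.card ≤ t) fun S => by
      have := S.card_le_univ
      simp only [Function.Involutive.coe_toPerm, card_compl, Fintype.card_fin] at this ⊢
      omega
  have hsplit := card_filter_add_card_filter_not (s := univ) fun S : Finset (Fin n) => S.card ≤ t
  rw [Fintype.card_subtype, Fintype.card_subtype] at hcompl
  rw [card_univ, Fintype.card_finset, Fintype.card_fin] at hsplit
  rw [Fintype.card_subtype]
  subst hn
  rw [Nat.add_sub_cancel]
  rw [pow_succ] at hsplit
  omega

lemma card_lowMonomial_le_card_onset {f : (Fin n → ZMod 2) → ZMod 2} (hf : t < AI f) :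
    Fintype.card (LowMonomial n t) ≤ #(univ.filter fun x => f x = 1) := by
  rw [← rank_evalMatrix (E := fun x : {x // f x = 1} => x.1) hf fun x hx => ⟨⟨x, hx⟩, rfl⟩,
    ← Fintype.card_subtype]
  exact Matrix.rank_le_card_height _

lemma card_onset_of_odd (hn : n = 2 * t + 1) {f : (Fin n → ZMod 2) → ZMod 2} (hf : t < AI f) :
    #(univ.filter fun x => f x = 1) = 2 ^ (n - 1) := by
  have h1 := card_lowMonomial_le_card_onset hf
  have h0 := card_lowMonomial_le_card_onset (f := fun x => f x + 1) ((AI_add_one f).symm ▸ hf)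
  have hsplit := card_filter_add_card_filter_not (s := univ) fun x => f x = 1
  have hoff : (univ.filter fun x => f x + 1 = 1) = univ.filter fun x => ¬ f x = 1 := by
    ext x; simp [zmod_two_ne_one_iff]
  rw [hoff] at h0
  rw [card_lowMonomial_of_odd hn] at h0 h1
  rw [card_univ, Fintype.card_fun, ZMod.card, Fintype.card_fin] at hsplit
  have : 2 ^ n = 2 ^ (n - 1) + 2 ^ (n - 1) := by
    subst hn; rw [Nat.add_sub_cancel, pow_succ]; omega
  omega

lemma isUnit_det_submatrix_of_onset_subset_range {N k : ℕ}
    (hN : Fintype.card (LowMonomial n t) = N) {f : (Fin n → ZMod 2) → ZMod 2} (hf : t < AI f)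
    {Y Z : Fin N → Fin n → ZMod 2} {W : Matrix (Fin N) (Fin N) (ZMod 2)}
    (hW : W * VEnum t Y = VEnum t Z) {i j : Fin k → Fin N} (hj : Function.Injective j)
    (hcover : ∀ x, f x = 1 → x ∈ Set.range (Function.extend j (Z ∘ i) Y)) :
    IsUnit (W.submatrix i j).det := by
  set M := Matrix.of (Function.extend j (fun a => W (i a)) fun r => Pi.single r 1)
  have hMV : M * VEnum t Y = evalMatrix t (Function.extend j (Z ∘ i) Y) := by
    rw [Matrix.of_extend_single_mul hj]
    ext r S
    by_cases h : ∃ a, j a = r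
    · obtain ⟨a, rfl⟩ := h
      rw [Matrix.of_apply, hj.extend_apply (e' := (VEnum t Y : Fin N → _ → ZMod 2)), evalMatrix,
        Matrix.of_apply, hj.extend_apply]
      exact congrFun (congrFun hW (i a)) S
    · rw [Matrix.of_apply, Function.extend_apply' (e' := (VEnum t Y : Fin N → _ → ZMod 2)) _ _ h,
        evalMatrix, Matrix.of_apply, Function.extend_apply' _ _ _ h]
      rfl
  have hM : IsUnit M := Matrix.isUnit_of_rank_mul_eq_card <| by
    rw [hMV, rank_evalMatrix hf hcover, hN, Fintype.card_fin]
  have := (Matrix.isUnit_iff_isUnit_det M).1 hM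
  rwa [Matrix.det_of_extend_single hj] at this

def flipAt (F : (Fin n → ZMod 2) → ZMod 2) {N k : ℕ} (Y Z : Fin N → Fin n → ZMod 2)
    (i j : Fin k → Fin N) : (Fin n → ZMod 2) → ZMod 2 :=
  fun X => if (∃ a, Z (i a) = X) ∨ (∃ a, Y (j a) = X) then F X + 1 else F X

lemma onset_flipAt_subset_range_extend {F : (Fin n → ZMod 2) → ZMod 2} {N k : ℕ}
    {Y Z : Fin N → Fin n → ZMod 2} (hY : Set.range Y = {x | F x = 1}) {i j : Fin k → Fin N}
    (hj : Function.Injective j) (x : Fin n → ZMod 2) (hx : flipAt F Y Z i j x = 1) :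
    x ∈ Set.range (Function.extend j (Z ∘ i) Y) := by
  by_cases hZx : ∃ a, Z (i a) = x
  · obtain ⟨a, rfl⟩ := hZx
    exact ⟨j a, hj.extend_apply _ _ a⟩
  by_cases hYx : ∃ a, Y (j a) = x
  · obtain ⟨a, rfl⟩ := hYx
    have hF : F (Y (j a)) = 1 := hY.subset ⟨j a, rfl⟩
    rw [flipAt, if_pos (Or.inr ⟨a, rfl⟩), hF] at hx
    exact absurd hx (by decide)
  rw [flipAt, if_neg (not_or.2 ⟨hZx, hYx⟩)] at hx
  obtain ⟨r, rfl⟩ := hY.superset hx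
  exact ⟨r, Function.extend_apply' _ _ _ fun ⟨a, ha⟩ => hYx ⟨a, congrArg Y ha⟩⟩

lemma exists_eq_flipAt {N : ℕ} {F f : (Fin n → ZMod 2) → ZMod 2} {Y Z : Fin N → Fin n → ZMod 2}
    (hYinj : Function.Injective Y) (hYran : Set.range Y = {x | F x = 1})
    (hZinj : Function.Injective Z) (hZran : Set.range Z = {x | F x = 0})
    (hcard : #(univ.filter fun x => f x = 1) = N) :
    ∃ k ≤ N, ∃ i j : Fin k → Fin N, StrictMono i ∧ StrictMono j ∧ f = flipAt F Y Z i j := by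
  set onF := univ.filter fun x => F x = 1
  set onf := univ.filter fun x => f x = 1
  have hcardF : #onF = N := by
    rw [← card_fin N, ← card_image_of_injective univ hYinj]
    congr
    ext x
    simpa [onF] using (Set.ext_iff.1 hYran x).symm
  have hA : ∀ x ∈ onf \ onF, x ∈ Set.range Z := fun x hx => by
    simp only [mem_sdiff, mem_filter, mem_univ, true_and, zmod_two_ne_one_iff, onf, onF] at hx
    exact hZran.superset hx.2
  have hB : ∀ x ∈ onF \ onf, x ∈ Set.range Y := fun x hx => by
    simp only [mem_sdiff, mem_filter, mem_univ, true_and, onf, onF] at hx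
    exact hYran.superset hx.1
  have hAB : #((onf \ onF).preimage Z hZinj.injOn) = #((onF \ onf).preimage Y hYinj.injOn) := by
    rw [card_preimage_of_subset_range hZinj hA, card_preimage_of_subset_range hYinj hB,
      card_sdiff_comm (hcard.trans hcardF.symm)]
  refine ⟨_, (card_le_univ _).trans_eq (card_fin N), _, _, (orderEmbOfFin _ hAB).strictMono,
    (orderEmbOfFin _ rfl).strictMono, funext fun X => ?_⟩
  simp only [flipAt, exists_apply_orderEmbOfFin_preimage_eq_iff hZinj hA,
    exists_apply_orderEmbOfFin_preimage_eq_iff hYinj hB, mem_sdiff, mem_filter, mem_univ,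
    true_and, onf, onF]
  generalize f X = a, F X = b
  revert a b
  decide

end BooleanFunction

open BooleanFunction

theorem stmt_7_general (n t : ℕ) (hn : n = 2 * t + 1)
    (F : (Fin n → ZMod 2) → ZMod 2)
    (Y Z : Fin (2 ^ (n - 1)) → (Fin n → ZMod 2))
    (hYinj : Function.Injective Y) (hYran : Set.range Y = {x | F x = 1})
    (hZinj : Function.Injective Z) (hZran : Set.range Z = {x | F x = 0})
    (W : Matrix (Fin (2 ^ (n - 1))) (Fin (2 ^ (n - 1))) (ZMod 2))
    (hW : W * VEnum t Y = VEnum t Z)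
    (f : (Fin n → ZMod 2) → ZMod 2) (hf : AI f = t + 1) :
    ∃ k ≤ 2 ^ (n - 1), ∃ i j : Fin k → Fin (2 ^ (n - 1)),
      StrictMono i ∧ StrictMono j ∧ IsUnit (W.submatrix i j).det ∧
      f = fun X => if (∃ a, Z (i a) = X) ∨ (∃ a, Y (j a) = X) then F X + 1 else F X := by
  have hAI : t < AI f := hf ▸ t.lt_succ_self
  obtain ⟨k, hk, i, j, hi, hj, rfl⟩ :=
    exists_eq_flipAt hYinj hYran hZinj hZran (card_onset_of_odd hn hAI)
  refine ⟨k, hk, i, j, hi, hj, ?_, rfl⟩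
  exact isUnit_det_submatrix_of_onset_subset_range (card_lowMonomial_of_odd hn) hAI hW
    hj.injective (onset_flipAt_subset_range_extend hYran hj.injective)

/-- every `f` with `AI(f) = t+1` is obtained from `F` by flipping the values at
`Z_{i₁},…,Z_{i_k},Y_{j₁},…,Y_{j_k}` for some `0 ≤ k ≤ 2^{n-1}` and indices
`i₁ < … < i_k`, `j₁ < … < j_k` for which the corresponding `k × k` submatrix of
`W = V(0_F) · V(1_F)⁻¹` is invertible. -/
theorem stmt_7 (n t : ℕ) (hn : n = 2 * t + 1)
    (F : (Fin n → ZMod 2) → ZMod 2) (hF : AI F = t + 1)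
    (Y Z : Fin (2 ^ (n - 1)) → (Fin n → ZMod 2))
    (hYinj : Function.Injective Y) (hYran : Set.range Y = {x | F x = 1})
    (hZinj : Function.Injective Z) (hZran : Set.range Z = {x | F x = 0})
    (W : Matrix (Fin (2 ^ (n - 1))) (Fin (2 ^ (n - 1))) (ZMod 2))
    (hW : W * VEnum t Y = VEnum t Z)
    (f : (Fin n → ZMod 2) → ZMod 2) (hf : AI f = t + 1) :
    ∃ k ≤ 2 ^ (n - 1), ∃ i j : Fin k → Fin (2 ^ (n - 1)),
      StrictMono i ∧ StrictMono j ∧ IsUnit (W.submatrix i j).det ∧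
      f = fun X => if (∃ a, Z (i a) = X) ∨ (∃ a, Y (j a) = X) then F X + 1 else F X :=
  stmt_7_general n t hn F Y Z hYinj hYran hZinj hZran W hW f hf
end

section
/- Let n be a positive integer and f a Boolean function of n variables. Then AI(f) ≤ ⌈n/2⌉. -/
/-!
Complementation maps the subsets of `Fin n` of size `> ⌈n/2⌉` injectively to subsets of size
`< ⌈n/2⌉`, so there are more than `2 ^ n / 2` monomials of degree at most `⌈n/2⌉`, while one of
`f` and `f ⊕ 1` is `1` on at most `2 ^ n / 2` points. Asking a combination of these monomials to
vanish on those points is therefore an underdetermined linear system over `F_2`; a nonzero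
solution is an annihilator of degree at most `⌈n/2⌉`, because the ANF coefficients of a
combination of distinct monomials are its coefficients.
-/

open Finset

lemma ZMod.two_eq_ite_eq_one (a : ZMod 2) : a = if a = 1 then 1 else 0 := by
  revert a; decide

lemma Matrix.exists_ne_zero_mulVec_eq_zero_of_card_lt {m k K : Type*} [Field K]
    [Fintype m] [Fintype k] (A : Matrix m k K) (h : Fintype.card m < Fintype.card k) :
    ∃ v ≠ 0, A.mulVec v = 0 := by
  have hker : LinearMap.ker A.mulVecLin ≠ ⊥ :=
    LinearMap.ker_ne_bot_of_finrank_lt (by simpa only [Module.finrank_fintype_fun_eq_card])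
  obtain ⟨v, hv, hv0⟩ := (Submodule.ne_bot_iff _).mp hker
  exact ⟨v, hv0, hv⟩

lemma two_pow_card_lt_two_mul_card_filter_card_le {α : Type*} [Fintype α] [DecidableEq α]
    {D : ℕ} (hD : D ≤ Fintype.card α) (h2D : Fintype.card α ≤ 2 * D) :
    2 ^ Fintype.card α < 2 * #{S : Finset α | #S ≤ D} := by
  have hsplit :
      #{S : Finset α | #S ≤ D} + #{S : Finset α | ¬ #S ≤ D} = 2 ^ Fintype.card α := by
    rw [card_filter_add_card_filter_not, card_univ, Fintype.card_finset]
  have hcompl : #{S : Finset α | ¬ #S ≤ D} ≤ #{S : Finset α | #S < D} := by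
    refine card_le_card_of_injOn compl (fun S hS => ?_) compl_injective.injOn
    simp only [coe_filter, mem_univ, true_and, Set.mem_ofPred_eq] at hS ⊢
    have hS_le := S.card_le_univ
    rw [card_compl]
    omega
  have hlt : #{S : Finset α | #S < D} < #{S : Finset α | #S ≤ D} := by
    obtain ⟨S₀, -, hS₀⟩ := exists_subset_card_eq (s := (univ : Finset α)) (n := D)
      (by rwa [card_univ])
    refine card_lt_card ((ssubset_iff_of_subset ?_).mpr ⟨S₀, ?_, ?_⟩) <;>
      simp_all [subset_iff, le_of_lt]
  omega

variable {n : ℕ}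

def indicatorVec (U : Finset (Fin n)) : Fin n → ZMod 2 := fun i => if i ∈ U then 1 else 0

lemma anfCoeff_eq_sum_powerset (f : (Fin n → ZMod 2) → ZMod 2) (S : Finset (Fin n)) :
    anfCoeff f S = ∑ U ∈ S.powerset, f (indicatorVec U) := by
  have hinv : ∀ x : Fin n → ZMod 2, indicatorVec ({i | x i = 1} : Finset _) = x := fun x =>
    funext fun i => by simp [indicatorVec, ← ZMod.two_eq_ite_eq_one]
  refine sum_nbij' (fun x => ({i | x i = 1} : Finset _)) indicatorVec ?_ ?_
    (fun x _ => hinv x) ?_ ?_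
  · intro x hx
    simp only [mem_filter, mem_univ, true_and] at hx
    simpa [subset_iff] using hx
  · intro U hU
    simpa [indicatorVec, subset_iff] using hU
  · intro U _
    ext i
    simp [indicatorVec]
  · intro x _
    rw [hinv]

lemma prod_indicatorVec (T U : Finset (Fin n)) :
    ∏ i ∈ T, indicatorVec U i = if T ⊆ U then 1 else 0 := by
  simp [indicatorVec, prod_boole, subset_iff]

lemma anfCoeff_monomial (T S : Finset (Fin n)) :
    anfCoeff (fun x => ∏ i ∈ T, x i) S = if S = T then 1 else 0 := by
  rw [anfCoeff_eq_sum_powerset]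
  simp_rw [prod_indicatorVec]
  rw [sum_boole, ← Icc_eq_filter_powerset]
  by_cases hTS : T ⊆ S
  · rw [card_Icc_finset hTS]
    rcases hTS.eq_or_ssubset with rfl | hlt
    · simp
    · rw [if_neg hlt.ne', Nat.cast_pow, show ((2 : ℕ) : ZMod 2) = 0 from rfl,
        zero_pow (Nat.sub_pos_of_lt (card_lt_card hlt)).ne']
  · rw [Icc_eq_empty (fun h => hTS h), if_neg (fun h => hTS h.ge)]
    simp

lemma anfCoeff_sum_mul {ι : Type*} (s : Finset ι) (F : ι → (Fin n → ZMod 2) → ZMod 2)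
    (c : ι → ZMod 2) (S : Finset (Fin n)) :
    anfCoeff (fun x => ∑ j ∈ s, F j x * c j) S = ∑ j ∈ s, anfCoeff (F j) S * c j := by
  simp only [anfCoeff, sum_mul]
  exact sum_comm

lemma degB_le_of_anfCoeff_eq_zero {g : (Fin n → ZMod 2) → ZMod 2} {D : ℕ}
    (h : ∀ S : Finset (Fin n), D < #S → anfCoeff g S = 0) : degB g ≤ D :=
  Finset.sup_le fun S hS => not_lt.mp fun hlt => (mem_filter.mp hS).2 (h S hlt)

def evalANF (D : ℕ) (c : {S : Finset (Fin n) // #S ≤ D} → ZMod 2) :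
    (Fin n → ZMod 2) → ZMod 2 :=
  fun x => ∑ S, (∏ i ∈ S.1, x i) * c S

lemma anfCoeff_evalANF (D : ℕ) (c : {S : Finset (Fin n) // #S ≤ D} → ZMod 2)
    (S : Finset (Fin n)) :
    anfCoeff (evalANF D c) S = if h : #S ≤ D then c ⟨S, h⟩ else 0 := by
  unfold evalANF
  rw [anfCoeff_sum_mul]
  simp_rw [anfCoeff_monomial, ite_mul, one_mul, zero_mul]
  split_ifs with h
  · rw [sum_eq_single ⟨S, h⟩ (fun T _ hT => if_neg fun hST => hT (Subtype.ext hST.symm))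
      (fun h' => absurd (mem_univ _) h'), if_pos rfl]
  · exact sum_eq_zero fun T _ => if_neg fun hST : S = T.1 => h (hST ▸ T.2)

lemma degB_evalANF_le (D : ℕ) (c : {S : Finset (Fin n) // #S ≤ D} → ZMod 2) :
    degB (evalANF D c) ≤ D :=
  degB_le_of_anfCoeff_eq_zero fun S hS => by rw [anfCoeff_evalANF, dif_neg hS.not_ge]

lemma evalANF_ne_zero {D : ℕ} {c : {S : Finset (Fin n) // #S ≤ D} → ZMod 2} (hc : c ≠ 0) :
    evalANF D c ≠ 0 := by
  obtain ⟨S, hS⟩ := Function.ne_iff.mp hc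
  intro h0
  have := anfCoeff_evalANF D c S.1
  rw [h0, dif_pos S.2] at this
  exact hS (by simpa [anfCoeff] using this.symm)

lemma exists_annihilator_degB_le_of_card_lt (D : ℕ) (f : (Fin n → ZMod 2) → ZMod 2)
    (hcard : #{x | f x = 1} < Fintype.card {S : Finset (Fin n) // #S ≤ D}) :
    ∃ g, IsAnnihilator f g ∧ degB g ≤ D := by
  obtain ⟨c, hc0, hc⟩ := (VSet D {x | f x = 1}).exists_ne_zero_mulVec_eq_zero_of_card_lt
    (by rwa [Fintype.card_ofFinset])
  refine ⟨evalANF D c, ⟨evalANF_ne_zero hc0, fun x => ?_⟩, degB_evalANF_le D c⟩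
  by_cases hx : f x = 1
  · rw [show evalANF D c x = 0 from congrFun hc ⟨x, hx⟩, mul_zero]
  · rw [(ZMod.two_eq_ite_eq_one (f x)).trans (if_neg hx), zero_mul]

lemma card_filter_eq_one_add_card_filter_add_one_eq_one {α : Type*} [Fintype α]
    (f : α → ZMod 2) : #{x | f x = 1} + #{x | f x + 1 = 1} = Fintype.card α := by
  have h : ∀ a : ZMod 2, a + 1 = 1 ↔ ¬a = 1 := by decide
  simp_rw [h]
  rw [card_filter_add_card_filter_not, card_univ]

lemma AI_le_degB {f g : (Fin n → ZMod 2) → ZMod 2}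
    (hg : IsAnnihilator f g ∨ IsAnnihilator (fun x => f x + 1) g) : AI f ≤ degB g :=
  Nat.sInf_le ⟨g, hg, rfl⟩

theorem stmt_12_general (n : ℕ) (f : (Fin n → ZMod 2) → ZMod 2) :
    AI f ≤ (n + 1) / 2 := by
  set D := (n + 1) / 2
  have hsplit : #{x | f x = 1} + #{x | f x + 1 = 1} = 2 ^ n := by
    simpa using card_filter_eq_one_add_card_filter_add_one_eq_one f
  have hmon : 2 ^ n < 2 * Fintype.card {S : Finset (Fin n) // #S ≤ D} := by
    simpa [Fintype.card_subtype] using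
      two_pow_card_lt_two_mul_card_filter_card_le (α := Fin n) (D := D) (by simp; omega)
        (by simp; omega)
  rcases lt_or_ge #{x | f x = 1} (Fintype.card {S : Finset (Fin n) // #S ≤ D}) with hf | hf
  · obtain ⟨g, hg, hdeg⟩ := exists_annihilator_degB_le_of_card_lt D f hf
    exact (AI_le_degB (.inl hg)).trans hdeg
  · obtain ⟨g, hg, hdeg⟩ :=
      exists_annihilator_degB_le_of_card_lt D (fun x => f x + 1) (by omega)
    exact (AI_le_degB (.inr hg)).trans hdeg

/-- `AI(f) ≤ ⌈n/2⌉` for every `n`-variable Boolean function `f`. -/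
theorem stmt_12 (n : ℕ) (hn : 0 < n) (f : (Fin n → ZMod 2) → ZMod 2) :
    AI f ≤ (n + 1) / 2 :=
  stmt_12_general n f
end
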